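/- (Mixed C²-estimates at the boundary.) There exists a constant C, depending only on Ω, f, φ and u₀ (in particular independent of T), such that for every T > 0 and every smooth strictly convex solution u of the flow on [0,T], every x ∈ ∂Ω, every t ∈ [0,T], and every unit vector τ tangential to ∂Ω at x (i.e., |τ| = 1 and ⟨τ, ν(x)⟩ = 0), one has |⟨D²u(x,t)·τ, ν(x)⟩| ≤ C. -/

import Mathlib

/-
Differentiating the Neumann condition `⟨∇u, ν⟩ = φ` along `∂Ω = {Φ = 0}` in a tangent direction
`τ` gives `u_{τν} = ∂_τ φ - ⟨∇u, ∂_τ ν⟩`, so it suffices to bound `|∇u|` on `∂Ω` uniformly in `t`,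
and this follows from the convexity of `u(·, t)`. As `∂Ω` is a compact regular level set of `Φ`,
there is `c > 0` such that every unit tangent `τ` at `x ∈ ∂Ω` has `⟨τ, z - x⟩ ≥ c` for some
`z ∈ Ω`; so the tangential part of `∇u(x)` is controlled by any upper bound for
`⟨z - x, ∇u(x)⟩ ≤ u(z) - u(x)` over `z ∈ cl Ω`, i.e. by the oscillation of `u`. At a maximum point
of `u` that upper bound is `0`, which bounds the gradient there and hence the oscillation.
The Neumann condition is only imposed for `t > 0`; at `t = 0` the estimate follows by continuity.
-/

open Set Filter Topology MeasureTheory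

noncomputable section

/-- `gradv u x` is the gradient (vector of partial derivatives) of `u` at `x`. -/
def gradv {n : ℕ} (u : (Fin n → ℝ) → ℝ) (x : Fin n → ℝ) : Fin n → ℝ :=
  fun i => fderiv ℝ u x (Pi.single i 1)

/-- `hessM u x` is the Hessian matrix `D²u(x)`. -/
def hessM {n : ℕ} (u : (Fin n → ℝ) → ℝ) (x : Fin n → ℝ) : Matrix (Fin n) (Fin n) ℝ :=
  Matrix.of (fun i j => fderiv ℝ (fun y => fderiv ℝ u y (Pi.single j 1)) x (Pi.single i 1))

/-- Euclidean inner product on `Fin n → ℝ`. -/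
def dotp {n : ℕ} (a b : Fin n → ℝ) : ℝ := ∑ i, a i * b i

/-- Euclidean norm on `Fin n → ℝ`. -/
def eNorm {n : ℕ} (a : Fin n → ℝ) : ℝ := Real.sqrt (dotp a a)

/-- Inner unit normal `ν(x) = -∇Φ(x)/|∇Φ(x)|` for the domain `Ω = {Φ < 0}`. -/
def innerNormal {n : ℕ} (Φ : (Fin n → ℝ) → ℝ) (x : Fin n → ℝ) : Fin n → ℝ :=
  fun i => -(gradv Φ x i) / eNorm (gradv Φ x)

/-- `u : cl Ω × [0,T] → ℝ` is a smooth strictly convex solution of the flow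
`∂u/∂t = log det D²u - log f(x, Du)` with Neumann condition `⟨Du, ν⟩ = φ`. -/
def IsFlowSol {n : ℕ} (Ω : Set (Fin n → ℝ)) (Φ : (Fin n → ℝ) → ℝ)
    (f : (Fin n → ℝ) → (Fin n → ℝ) → ℝ) (φ : (Fin n → ℝ) → ℝ) (T : ℝ)
    (u : (Fin n → ℝ) → ℝ → ℝ) : Prop :=
  ContDiff ℝ (⊤ : ℕ∞) (fun p : (Fin n → ℝ) × ℝ => u p.1 p.2) ∧
  (∀ t ∈ Icc (0:ℝ) T, ∀ x ∈ closure Ω, (hessM (fun y => u y t) x).PosDef) ∧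
  (∀ t ∈ Ioc (0:ℝ) T, ∀ x ∈ Ω,
     deriv (u x) t =
       Real.log (hessM (fun y => u y t) x).det -
         Real.log (f x (gradv (fun y => u y t) x))) ∧
  (∀ t ∈ Ioc (0:ℝ) T, ∀ x ∈ frontier Ω,
     dotp (gradv (fun y => u y t) x) (innerNormal Φ x) = φ x)

open Matrix

section Euclidean

variable {n : ℕ}

lemma dotp_eq_dotProduct (a b : Fin n → ℝ) : dotp a b = a ⬝ᵥ b := rfl

lemma dotp_comm (a b : Fin n → ℝ) : dotp a b = dotp b a := dotProduct_comm a b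

lemma dotp_add_left (a b c : Fin n → ℝ) : dotp (a + b) c = dotp a c + dotp b c :=
  add_dotProduct a b c

lemma dotp_sub_left (a b c : Fin n → ℝ) : dotp (a - b) c = dotp a c - dotp b c :=
  sub_dotProduct a b c

lemma dotp_sub_right (a b c : Fin n → ℝ) : dotp a (b - c) = dotp a b - dotp a c :=
  dotProduct_sub a b c

lemma dotp_smul_left (r : ℝ) (a b : Fin n → ℝ) : dotp (r • a) b = r * dotp a b :=
  smul_dotProduct r a b

lemma dotp_smul_right (r : ℝ) (a b : Fin n → ℝ) : dotp a (r • b) = r * dotp a b :=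
  dotProduct_smul r a b

lemma dotp_eq_inner (a b : Fin n → ℝ) :
    dotp a b = inner ℝ (WithLp.toLp 2 a) (WithLp.toLp 2 b) := by
  rw [EuclideanSpace.inner_toLp_toLp, dotp_eq_dotProduct, dotProduct_comm]; rfl

lemma eNorm_eq_norm (a : Fin n → ℝ) : eNorm a = ‖WithLp.toLp 2 a‖ := by
  rw [eNorm, dotp_eq_inner, real_inner_self_eq_norm_sq, Real.sqrt_sq (norm_nonneg _)]

lemma eNorm_nonneg (a : Fin n → ℝ) : 0 ≤ eNorm a := Real.sqrt_nonneg _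

lemma eNorm_eq_one_iff {a : Fin n → ℝ} : eNorm a = 1 ↔ dotp a a = 1 := by
  rw [eNorm, Real.sqrt_eq_one]

lemma abs_dotp_le (a b : Fin n → ℝ) : |dotp a b| ≤ eNorm a * eNorm b := by
  rw [dotp_eq_inner, eNorm_eq_norm, eNorm_eq_norm]
  exact abs_real_inner_le_norm _ _

lemma eNorm_add_le (a b : Fin n → ℝ) : eNorm (a + b) ≤ eNorm a + eNorm b := by
  simp only [eNorm_eq_norm, WithLp.toLp_add]
  exact norm_add_le _ _

lemma eNorm_smul (c : ℝ) (a : Fin n → ℝ) : eNorm (c • a) = |c| * eNorm a := by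
  simp only [eNorm_eq_norm, WithLp.toLp_smul, norm_smul, Real.norm_eq_abs]

lemma eNorm_pos {a : Fin n → ℝ} (ha : a ≠ 0) : 0 < eNorm a := by
  rw [eNorm_eq_norm, norm_pos_iff]
  simpa using ha

lemma dotp_self_pos {a : Fin n → ℝ} (ha : a ≠ 0) : 0 < dotp a a :=
  Real.sqrt_pos.1 (eNorm_pos ha)

lemma Continuous.dotp {X : Type*} [TopologicalSpace X] {a b : X → Fin n → ℝ}
    (ha : Continuous a) (hb : Continuous b) : Continuous fun x => dotp (a x) (b x) :=
  continuous_finsetSum _ fun i _ =>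
    ((continuous_apply i).comp ha).mul ((continuous_apply i).comp hb)

lemma continuous_eNorm : Continuous (eNorm : (Fin n → ℝ) → ℝ) := by
  simp only [funext eNorm_eq_norm]
  exact (PiLp.continuous_toLp 2 _).norm

lemma isCompact_setOf_dotp_self_eq_one : IsCompact {a : Fin n → ℝ | dotp a a = 1} := by
  have hsphere : {a : Fin n → ℝ | dotp a a = 1} =
      WithLp.ofLp '' Metric.sphere (0 : EuclideanSpace ℝ (Fin n)) 1 := by
    ext a
    refine ⟨fun h => ⟨WithLp.toLp 2 a, ?_, rfl⟩, ?_⟩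
    · simpa [← eNorm_eq_one_iff, eNorm_eq_norm] using h
    · rintro ⟨b, hb, rfl⟩
      simpa [← eNorm_eq_one_iff, eNorm_eq_norm] using hb
  rw [hsphere]
  exact (isCompact_sphere 0 1).image (PiLp.continuous_ofLp 2 _)

end Euclidean

section DotProductRule

variable {n : ℕ} {E : Type*} [NormedAddCommGroup E] [NormedSpace ℝ E]

lemma DifferentiableAt.dotp {a b : E → Fin n → ℝ} {x : E} (ha : DifferentiableAt ℝ a x)
    (hb : DifferentiableAt ℝ b x) : DifferentiableAt ℝ (fun y => dotp (a y) (b y)) x :=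
  DifferentiableAt.fun_sum fun i _ =>
    (differentiableAt_pi.1 ha i).fun_mul (differentiableAt_pi.1 hb i)

lemma fderiv_dotp_apply {a b : E → Fin n → ℝ} {x : E} (ha : DifferentiableAt ℝ a x)
    (hb : DifferentiableAt ℝ b x) (w : E) :
    fderiv ℝ (fun y => dotp (a y) (b y)) x w =
      dotp (fderiv ℝ a x w) (b x) + dotp (a x) (fderiv ℝ b x w) := by
  have hab := HasFDerivAt.fun_sum (u := Finset.univ) fun i _ =>
    (hasFDerivAt_pi'.1 ha.hasFDerivAt i).fun_mul (hasFDerivAt_pi'.1 hb.hasFDerivAt i)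
  simp only [dotp]
  rw [hab.fderiv]
  simp [Finset.sum_add_distrib, mul_comm, add_comm]

lemma ContDiffAt.dotp {k : WithTop ℕ∞} {a b : E → Fin n → ℝ} {x : E}
    (ha : ContDiffAt ℝ k a x) (hb : ContDiffAt ℝ k b x) :
    ContDiffAt ℝ k (fun y => dotp (a y) (b y)) x :=
  ContDiffAt.sum fun i _ => (contDiffAt_pi.1 ha i).mul (contDiffAt_pi.1 hb i)

lemma ContDiffAt.eNorm {k : WithTop ℕ∞} {g : E → Fin n → ℝ} {x : E}
    (hg : ContDiffAt ℝ k g x) (hx : g x ≠ 0) : ContDiffAt ℝ k (fun y => eNorm (g y)) x := by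
  simp only [eNorm_eq_norm]
  refine ContDiffAt.norm ℝ (contDiffAt_euclidean.2 fun i => ?_) (by simpa using hx)
  exact contDiffAt_pi.1 hg i

end DotProductRule

section GradientHessian

variable {n : ℕ}

lemma fderiv_apply_eq_dotp_gradv (v : (Fin n → ℝ) → ℝ) (x w : Fin n → ℝ) :
    fderiv ℝ v x w = dotp w (gradv v x) := by
  conv_lhs => rw [← Finset.univ_sum_single w]
  simp only [map_sum, dotp, gradv]
  refine Finset.sum_congr rfl fun i _ => ?_
  rw [← smul_eq_mul, ← map_smul, ← Pi.single_smul, smul_eq_mul, mul_one]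

lemma fderiv_gradv_apply {v : (Fin n → ℝ) → ℝ} {x : Fin n → ℝ}
    (hv : DifferentiableAt ℝ (gradv v) x) (w : Fin n → ℝ) :
    fderiv ℝ (gradv v) x w = w ᵥ* hessM v x := by
  rw [show gradv v = fun y i => gradv v y i from rfl, fderiv_pi (differentiableAt_pi.1 hv)]
  ext i
  exact fderiv_apply_eq_dotp_gradv (fun y => gradv v y i) x w

lemma contDiff_gradv {v : (Fin n → ℝ) → ℝ} {k m : WithTop ℕ∞} (hv : ContDiff ℝ k v)
    (hm : m + 1 ≤ k) : ContDiff ℝ m (gradv v) :=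
  contDiff_pi.2 fun _ => (hv.fderiv_right hm).clm_apply contDiff_const

lemma hessM_transpose {v : (Fin n → ℝ) → ℝ} {x : Fin n → ℝ} (hv : ContDiffAt ℝ 2 v x) :
    (hessM v x)ᵀ = hessM v x := by
  have hd : DifferentiableAt ℝ (fderiv ℝ v) x :=
    (hv.fderiv_right (m := 1) le_rfl).differentiableAt one_ne_zero
  have hswap : ∀ a b, fderiv ℝ (fun y => fderiv ℝ v y a) x b = fderiv ℝ (fderiv ℝ v) x b a :=
    fun a b => by simp [fderiv_clm_apply hd (differentiableAt_const a)]
  have hsymm := hv.isSymmSndFDerivAt (by simp [minSmoothness_of_isRCLikeNormedField])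
  ext i j
  simp only [transpose_apply, hessM, of_apply, hswap]
  exact hsymm _ _

lemma continuous_hessM_of_contDiff {F : Type*} [NormedAddCommGroup F] [NormedSpace ℝ F]
    {u : (Fin n → ℝ) → F → ℝ} (hu : ContDiff ℝ 2 fun p : (Fin n → ℝ) × F => u p.1 p.2)
    (x : Fin n → ℝ) : Continuous fun t => hessM (fun y => u y t) x := by
  refine continuous_pi fun i => continuous_pi fun j => ?_
  have hfirst : ContDiff ℝ 1
      fun p : F × (Fin n → ℝ) => fderiv ℝ (fun z => u z p.1) p.2 (Pi.single j 1) :=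
    ContDiff.fderiv_apply (f := fun p z => u z p.1)
      (hu.comp (contDiff_snd.prodMk (contDiff_fst.comp contDiff_fst))) contDiff_snd
      contDiff_const le_rfl
  exact (ContDiff.fderiv_apply (m := 1) (n := 0)
    (f := fun t y => fderiv ℝ (fun z => u z t) y (Pi.single j 1))
    hfirst contDiff_const contDiff_const le_rfl).continuous

end GradientHessian

section InnerNormal

variable {n : ℕ} {Φ : (Fin n → ℝ) → ℝ} {x : Fin n → ℝ}

lemma innerNormal_eq_smul : innerNormal Φ x = -(eNorm (gradv Φ x))⁻¹ • gradv Φ x := by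
  ext i
  simp [innerNormal, div_eq_inv_mul]

lemma dotp_innerNormal_self (hx : gradv Φ x ≠ 0) :
    dotp (innerNormal Φ x) (innerNormal Φ x) = 1 := by
  rw [← eNorm_eq_one_iff, innerNormal_eq_smul, eNorm_smul, abs_neg,
    abs_inv, abs_of_pos (eNorm_pos hx), inv_mul_cancel₀ (eNorm_pos hx).ne']

lemma dotp_innerNormal_eq_zero_iff (hx : gradv Φ x ≠ 0) {τ : Fin n → ℝ} :
    dotp τ (innerNormal Φ x) = 0 ↔ dotp τ (gradv Φ x) = 0 := by
  rw [innerNormal_eq_smul, dotp_smul_right, mul_eq_zero, neg_eq_zero, inv_eq_zero,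
    or_iff_right (eNorm_pos hx).ne']

lemma contDiffAt_innerNormal {k : WithTop ℕ∞} (hΦ : ContDiff ℝ (k + 1) Φ)
    (hx : gradv Φ x ≠ 0) : ContDiffAt ℝ k (innerNormal Φ) x := by
  have hg : ContDiff ℝ k (gradv Φ) := contDiff_gradv hΦ le_rfl
  rw [show innerNormal Φ = _ from funext fun _ => innerNormal_eq_smul]
  exact ((hg.contDiffAt.eNorm hx).inv (eNorm_pos hx).ne').neg.smul hg.contDiffAt

lemma continuousOn_fderiv_innerNormal (hΦ : ContDiff ℝ 2 Φ) :
    ContinuousOn (fderiv ℝ (innerNormal Φ)) {x | gradv Φ x ≠ 0} :=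
  ContDiffOn.continuousOn_fderiv_of_isOpen
    (fun _ hx => (contDiffAt_innerNormal (k := 1) hΦ hx).contDiffWithinAt)
    (isOpen_compl_singleton.preimage (contDiff_gradv hΦ (m := 0) (by norm_num)).continuous)
    le_rfl

end InnerNormal

section Convexity

open AffineMap

lemma ConvexOn.add_apply_sub_le_of_hasFDerivAt {E : Type*} [NormedAddCommGroup E]
    [NormedSpace ℝ E] {K : Set E} {f : E → ℝ} {f' : E →L[ℝ] ℝ} {x y : E}
    (hf : ConvexOn ℝ K f) (hx : x ∈ K) (hy : y ∈ K) (hf' : HasFDerivAt f f' x) :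
    f x + f' (y - x) ≤ f y := by
  set ℓ : ℝ →ᵃ[ℝ] E := lineMap x y
  have hseg : ConvexOn ℝ (Icc 0 1) (f ∘ ℓ) :=
    (hf.comp_affineMap ℓ).subset (fun s hs => hf.1.lineMap_mem hx hy hs) (convex_Icc 0 1)
  have hd : HasDerivAt (f ∘ ℓ) (f' (y - x)) 0 :=
    HasFDerivAt.comp_hasDerivAt 0 (by simpa [ℓ] using hf') hasDerivAt_lineMap
  have hslope := hseg.le_slope_of_hasDerivAt (by simp) (by simp) zero_lt_one hd
  rw [slope_def_field] at hslope
  simp only [Function.comp_apply, ℓ, lineMap_apply_one, lineMap_apply_zero, sub_zero,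
    div_one] at hslope
  linarith

variable {n : ℕ}

lemma hasDerivAt_dotp_gradv_lineMap {v : (Fin n → ℝ) → ℝ} (hv : ContDiff ℝ 2 v)
    (x y : Fin n → ℝ) (s : ℝ) :
    HasDerivAt (fun s => dotp (y - x) (gradv v (lineMap x y s)))
      (dotp (y - x) ((y - x) ᵥ* hessM v (lineMap x y s))) s := by
  have hG : Differentiable ℝ (gradv v) :=
    (contDiff_gradv hv (by norm_num : (1 : WithTop ℕ∞) + 1 ≤ 2)).differentiable one_ne_zero
  have h := ((differentiableAt_const (y - x)).dotp
    (hG (lineMap x y s))).hasFDerivAt.comp_hasDerivAt s hasDerivAt_lineMap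
  rw [fderiv_dotp_apply (differentiableAt_const _) (hG _), fderiv_gradv_apply (hG _)] at h
  simp only [fderiv_fun_const, Pi.zero_apply, _root_.zero_apply, dotp_eq_dotProduct,
    zero_dotProduct, zero_add] at h
  exact h

lemma convexOn_of_hessM_posSemidef {K : Set (Fin n → ℝ)} {v : (Fin n → ℝ) → ℝ}
    (hK : Convex ℝ K) (hv : ContDiff ℝ 2 v) (hH : ∀ x ∈ K, (hessM v x).PosSemidef) :
    ConvexOn ℝ K v := by
  refine ⟨hK, fun x hx y hy a b ha hb hab => ?_⟩
  set ℓ : ℝ →ᵃ[ℝ] (Fin n → ℝ) := lineMap x y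
  have hd1 : ∀ s : ℝ, HasDerivAt (v ∘ ℓ) (dotp (y - x) (gradv v (ℓ s))) s := fun s => by
    rw [← fderiv_apply_eq_dotp_gradv]
    exact ((hv.differentiable two_ne_zero) _).hasFDerivAt.comp_hasDerivAt s hasDerivAt_lineMap
  have hseg : ConvexOn ℝ (Icc 0 1) (v ∘ ℓ) := by
    refine convexOn_of_hasDerivWithinAt2_nonneg (convex_Icc 0 1)
      (fun s _ => (hd1 s).continuousAt.continuousWithinAt)
      (fun s _ => (hd1 s).hasDerivWithinAt)
      (fun s _ => (hasDerivAt_dotp_gradv_lineMap hv x y s).hasDerivWithinAt) fun s hs => ?_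
    rw [interior_Icc] at hs
    have hpsd := (hH _ (hK.lineMap_mem hx hy (Ioo_subset_Icc_self hs))).dotProduct_mulVec_nonneg
      (y - x)
    rwa [dotp_eq_dotProduct, dotProduct_comm, ← dotProduct_mulVec]
  have hconv := hseg.2 (left_mem_Icc.2 zero_le_one) (right_mem_Icc.2 zero_le_one) ha hb hab
  obtain rfl : a = 1 - b := by linarith
  simpa [ℓ, lineMap_apply_module] using hconv

end Convexity

section InwardDirections

lemma IsCompact.exists_pos_forall_le_of_forall_pos {X ι : Type*} [TopologicalSpace X]
    {S : Set X} (hS : IsCompact S) {F : ι → X → ℝ} (hF : ∀ i, ContinuousOn (F i) S)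
    (h : ∀ p ∈ S, ∃ i, 0 < F i p) : ∃ c > 0, ∀ p ∈ S, ∃ i, c ≤ F i p := by
  refine hS.induction_on (p := fun t => ∃ c > 0, ∀ p ∈ t, ∃ i, c ≤ F i p)
    ⟨1, one_pos, by simp⟩ (fun s t hst ⟨c, hc, ht⟩ => ⟨c, hc, fun p hp => ht p (hst hp)⟩)
    (fun s t ⟨c, hc, hs⟩ ⟨d, hd, ht⟩ => ⟨min c d, lt_min hc hd, ?_⟩) fun p hp => ?_
  · rintro q (hq | hq)
    · obtain ⟨i, hi⟩ := hs q hq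
      exact ⟨i, (min_le_left c d).trans hi⟩
    · obtain ⟨i, hi⟩ := ht q hq
      exact ⟨i, (min_le_right c d).trans hi⟩
  · obtain ⟨i, hi⟩ := h p hp
    exact ⟨{q | F i p / 2 < F i q}, continuousWithinAt_const.eventually_lt (hF i p hp)
      (half_lt_self hi), F i p / 2, half_pos hi, fun q hq => ⟨i, le_of_lt hq⟩⟩

variable {n : ℕ} {Φ : (Fin n → ℝ) → ℝ}

lemma exists_neg_dotp_sub_pos {x τ : Fin n → ℝ} (hΦ : DifferentiableAt ℝ Φ x) (hx : Φ x = 0)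
    (hgx : gradv Φ x ≠ 0) (hτ : dotp τ τ = 1) (hτx : dotp τ (gradv Φ x) = 0) :
    ∃ z, Φ z < 0 ∧ 0 < dotp τ (z - x) := by
  -- `Φ` decreases along `τ - ∇Φ(x)`, which still has unit component along `τ`.
  set w := τ - gradv Φ x
  have hw : dotp w (gradv Φ x) < 0 := by
    rw [dotp_sub_left, hτx, zero_sub, neg_neg_iff_pos]
    exact dotp_self_pos hgx
  have hψ : HasDerivAt (fun s : ℝ => Φ (x + s • w)) (dotp w (gradv Φ x)) 0 := by
    rw [← fderiv_apply_eq_dotp_gradv]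
    refine HasFDerivAt.comp_hasDerivAt 0 (by simpa using hΦ.hasFDerivAt) ?_
    simpa using ((hasDerivAt_id (0 : ℝ)).smul_const w).const_add x
  obtain ⟨s, hs, hs0⟩ := ((hψ.tendsto_slope_zero_right.eventually (gt_mem_nhds hw)).and
    self_mem_nhdsWithin).exists
  refine ⟨x + s • w, ?_, ?_⟩
  · simp only [zero_add, zero_smul, add_zero, hx, sub_zero, smul_eq_mul] at hs
    exact neg_of_mul_neg_right hs (inv_nonneg.2 hs0.le)
  · rw [add_sub_cancel_left, dotp_smul_right, dotp_sub_right, hτ, hτx, sub_zero, mul_one]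
    exact hs0

def unitTangents (Φ : (Fin n → ℝ) → ℝ) (s : Set (Fin n → ℝ)) :
    Set ((Fin n → ℝ) × (Fin n → ℝ)) :=
  {p | p.1 ∈ s ∧ dotp p.2 p.2 = 1 ∧ dotp p.2 (gradv Φ p.1) = 0}

lemma isCompact_unitTangents {s : Set (Fin n → ℝ)} (hs : IsCompact s)
    (hΦ : Continuous (gradv Φ)) : IsCompact (unitTangents Φ s) := by
  have h := (hs.prod isCompact_setOf_dotp_self_eq_one).inter_right
    (isClosed_eq (continuous_snd.dotp (hΦ.comp continuous_fst)) (continuous_const (y := 0)))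
  convert h using 1
  ext p
  simp [unitTangents, and_assoc]

lemma exists_pos_le_dotp_of_mem_unitTangents (hΦ : ContDiff ℝ 1 Φ) {s : Set (Fin n → ℝ)}
    (hs : IsCompact s) (hs0 : ∀ x ∈ s, Φ x = 0) (hgrad : ∀ x ∈ s, gradv Φ x ≠ 0) :
    ∃ c > 0, ∀ p ∈ unitTangents Φ s, ∃ z, Φ z < 0 ∧ c ≤ dotp p.2 (z - p.1) := by
  obtain ⟨c, hc, h⟩ := (isCompact_unitTangents hs (contDiff_gradv hΦ le_rfl (m := 0)).continuous
    ).exists_pos_forall_le_of_forall_pos (F := fun (z : {z // Φ z < 0}) p => dotp p.2 (z - p.1))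
    (fun z => (continuous_snd.dotp (continuous_const.sub continuous_fst)).continuousOn)
    fun p ⟨hp, hτ, hτx⟩ => by
      obtain ⟨z, hz, hpos⟩ := exists_neg_dotp_sub_pos
        ((hΦ.differentiable one_ne_zero) p.1) (hs0 _ hp) (hgrad _ hp) hτ hτx
      exact ⟨⟨z, hz⟩, hpos⟩
  exact ⟨c, hc, fun p hp => let ⟨z, hz⟩ := h p hp; ⟨z, z.2, hz⟩⟩

end InwardDirections

section GradientBound

variable {n : ℕ}

lemma eNorm_le_of_dotp_sub_le {K : Set (Fin n → ℝ)} {x g ν : Fin n → ℝ} {c D M B : ℝ}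
    (hc : 0 < c) (hx : x ∈ K) (hν : dotp ν ν = 1) (hM : |dotp g ν| ≤ M)
    (hin : ∀ τ, dotp τ τ = 1 → dotp τ ν = 0 → ∃ z ∈ K, c ≤ dotp τ (z - x))
    (hD : ∀ z ∈ K, eNorm (z - x) ≤ D) (hB : ∀ z ∈ K, dotp (z - x) g ≤ B) :
    eNorm g ≤ M + (B + M * D) / c := by
  set a := dotp g ν
  set T := g - a • ν
  have hM0 : 0 ≤ M := (abs_nonneg a).trans hM
  have hD0 : 0 ≤ D := (eNorm_nonneg _).trans (hD x hx)
  have hB0 : 0 ≤ B := by simpa [dotp] using hB x hx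
  have hν1 : eNorm ν = 1 := eNorm_eq_one_iff.2 hν
  have hTν : dotp T ν = 0 := by
    rw [dotp_sub_left, dotp_smul_left, hν, mul_one, sub_self]
  have hT : eNorm T * c ≤ B + M * D := by
    rcases eq_or_ne T 0 with hT0 | hT0
    · rw [hT0, eNorm_eq_norm]
      simpa using add_nonneg hB0 (mul_nonneg hM0 hD0)
    set τ := (eNorm T)⁻¹ • T
    have hτ : dotp τ τ = 1 := by
      rw [← eNorm_eq_one_iff, eNorm_smul, abs_inv, abs_of_pos (eNorm_pos hT0),
        inv_mul_cancel₀ (eNorm_pos hT0).ne']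
    obtain ⟨z, hz, hcz⟩ := hin τ hτ (by rw [dotp_smul_left, hTν, mul_zero])
    have hτz : eNorm T * dotp τ (z - x) = dotp T (z - x) := by
      rw [dotp_smul_left, mul_inv_cancel_left₀ (eNorm_pos hT0).ne']
    have hsplit : dotp (z - x) g = dotp T (z - x) + a * dotp (z - x) ν := by
      rw [show g = T + a • ν by simp [T], dotp_comm, dotp_add_left, dotp_smul_left, dotp_comm ν]
    have hνz : |a * dotp (z - x) ν| ≤ M * D := by
      rw [abs_mul]
      refine mul_le_mul hM ((abs_dotp_le _ _).trans ?_) (abs_nonneg _) hM0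
      rw [hν1, mul_one]
      exact hD z hz
    calc eNorm T * c ≤ eNorm T * dotp τ (z - x) := mul_le_mul_of_nonneg_left hcz (eNorm_nonneg _)
      _ = dotp (z - x) g - a * dotp (z - x) ν := by rw [hsplit, hτz]; ring
      _ ≤ B + M * D := by linarith [hB z hz, (abs_le.1 hνz).1]
  calc eNorm g = eNorm (T + a • ν) := by simp [T]
    _ ≤ eNorm T + |a| := by simpa [eNorm_smul, hν1] using eNorm_add_le T (a • ν)
    _ ≤ M + (B + M * D) / c := by
      rw [← le_div_iff₀ hc] at hT
      linarith

lemma eNorm_gradv_le_of_convexOn {Ω : Set (Fin n → ℝ)} (hΩ : IsOpen Ω)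
    (hK : IsCompact (closure Ω)) {ν : (Fin n → ℝ) → Fin n → ℝ} {c D M : ℝ} (hc : 0 < c)
    (hν : ∀ x ∈ frontier Ω, dotp (ν x) (ν x) = 1)
    (hin : ∀ x ∈ frontier Ω, ∀ τ, dotp τ τ = 1 → dotp τ (ν x) = 0 →
      ∃ z ∈ closure Ω, c ≤ dotp τ (z - x))
    (hD : ∀ y ∈ closure Ω, ∀ z ∈ closure Ω, eNorm (z - y) ≤ D)
    {v : (Fin n → ℝ) → ℝ} (hv : Differentiable ℝ v) (hconv : ConvexOn ℝ (closure Ω) v)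
    (hM : ∀ x ∈ frontier Ω, |dotp (gradv v x) (ν x)| ≤ M) {x : Fin n → ℝ}
    (hx : x ∈ frontier Ω) :
    eNorm (gradv v x) ≤ M + (D * (M + M * D / c) + M * D) / c := by
  have hsub : frontier Ω ⊆ closure Ω := frontier_subset_closure
  have hsupport : ∀ y ∈ closure Ω, ∀ z ∈ closure Ω, dotp (z - y) (gradv v y) ≤ v z - v y :=
    fun y hy z hz => by
      have := hconv.add_apply_sub_le_of_hasFDerivAt hy hz (hv y).hasFDerivAt
      rw [fderiv_apply_eq_dotp_gradv] at this
      linarith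
  have hboundary : ∀ y ∈ frontier Ω, ∀ B, (∀ z ∈ closure Ω, dotp (z - y) (gradv v y) ≤ B) →
      eNorm (gradv v y) ≤ M + (B + M * D) / c := fun y hy B hB =>
    eNorm_le_of_dotp_sub_le hc (hsub hy) (hν y hy) (hM y hy) (hin y hy)
      (fun z hz => hD y (hsub hy) z hz) hB
  obtain ⟨y₀, hy₀, hmax⟩ := hK.exists_isMaxOn ⟨x, hsub hx⟩ hv.continuous.continuousOn
  have hM0 : 0 ≤ M := (abs_nonneg _).trans (hM x hx)
  have hD0 : 0 ≤ D := (eNorm_nonneg _).trans (hD x (hsub hx) x (hsub hx))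
  have hmax_grad : eNorm (gradv v y₀) ≤ M + M * D / c := by
    by_cases hy₀Ω : y₀ ∈ Ω
    · have hzero : gradv v y₀ = 0 := by
        have := (hmax.isLocalMax
          (mem_of_superset (hΩ.mem_nhds hy₀Ω) subset_closure)).fderiv_eq_zero
        ext i
        simp [gradv, this]
      rw [hzero, eNorm_eq_norm]
      simp only [WithLp.toLp_zero, norm_zero]
      positivity
    · have hy₀f : y₀ ∈ frontier Ω := by rw [hΩ.frontier_eq]; exact ⟨hy₀, hy₀Ω⟩
      simpa using hboundary y₀ hy₀f 0 fun z hz =>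
        (hsupport y₀ hy₀ z hz).trans (sub_nonpos.2 (hmax hz))
  refine hboundary x hx _ fun z hz => ?_
  calc dotp (z - x) (gradv v x) ≤ v z - v x := hsupport x (hsub hx) z hz
    _ ≤ v y₀ - v x := by linarith [show v z ≤ v y₀ from hmax hz]
    _ ≤ -dotp (x - y₀) (gradv v y₀) := by linarith [hsupport y₀ hy₀ x (hsub hx)]
    _ ≤ eNorm (x - y₀) * eNorm (gradv v y₀) := (neg_le_abs _).trans (abs_dotp_le _ _)
    _ ≤ D * (M + M * D / c) := mul_le_mul (hD y₀ hy₀ x (hsub hx)) hmax_grad (eNorm_nonneg _) hD0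

end GradientBound

section NeumannCondition

lemma HasStrictFDerivAt.apply_eq_zero_of_levelSet {E : Type*} [NormedAddCommGroup E]
    [NormedSpace ℝ E] [CompleteSpace E] {Φ g : E → ℝ} {Φ' g' : E →L[ℝ] ℝ} {x τ : E}
    (hΦ : HasStrictFDerivAt Φ Φ' x) (hg : HasStrictFDerivAt g g' x) (hΦ' : Φ' ≠ 0)
    (hlevel : ∀ y, Φ y = Φ x → g y = g x) (hτ : Φ' τ = 0) : g' τ = 0 := by
  have hextr : IsLocalExtrOn g {y | Φ y = Φ x} x :=
    .inl (eventually_nhdsWithin_of_forall fun y hy => (hlevel y hy).ge)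
  obtain ⟨a, b, hab, hsum⟩ := hextr.exists_multipliers_of_hasStrictFDerivAt_1d hΦ hg
  have hb : b ≠ 0 := by
    rintro rfl
    have ha : a ≠ 0 := fun ha => hab (by simp [ha])
    exact hΦ' (by simpa [ha] using hsum)
  have hsumτ := congrArg (fun L : E →L[ℝ] ℝ => L τ) hsum
  simp only [_root_.add_apply, _root_.smul_apply, hτ, smul_eq_mul, mul_zero, zero_add,
    _root_.zero_apply] at hsumτ
  exact (mul_eq_zero.1 hsumτ).resolve_left hb

variable {n : ℕ} {Φ v φ : (Fin n → ℝ) → ℝ} {x τ : Fin n → ℝ}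

lemma dotp_hessM_mulVec_innerNormal (hΦ : ContDiff ℝ 2 Φ) (hv : ContDiff ℝ 2 v)
    (hφ : ContDiff ℝ 1 φ) (hx : Φ x = 0) (hgx : gradv Φ x ≠ 0)
    (hbc : ∀ y, Φ y = 0 → dotp (gradv v y) (innerNormal Φ y) = φ y)
    (hτ : dotp τ (gradv Φ x) = 0) :
    dotp (hessM v x *ᵥ τ) (innerNormal Φ x) =
      fderiv ℝ φ x τ - dotp (gradv v x) (fderiv ℝ (innerNormal Φ) x τ) := by
  have hG : ContDiffAt ℝ 1 (gradv v) x :=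
    (contDiff_gradv hv (by norm_num : (1 : WithTop ℕ∞) + 1 ≤ 2)).contDiffAt
  have hN : ContDiffAt ℝ 1 (innerNormal Φ) x := contDiffAt_innerNormal hΦ hgx
  have hg : ContDiffAt ℝ 1 (fun y => dotp (gradv v y) (innerNormal Φ y) - φ y) x :=
    (hG.dotp hN).sub hφ.contDiffAt
  have hΦ' : fderiv ℝ Φ x ≠ 0 := fun h => hgx (by ext i; simp [gradv, h])
  have htangent := (hΦ.contDiffAt.hasStrictFDerivAt two_ne_zero).apply_eq_zero_of_levelSet
    (hg.hasStrictFDerivAt one_ne_zero) hΦ' (fun y hy => by simp [hbc y (hy.trans hx), hbc x hx])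
    (by rwa [fderiv_apply_eq_dotp_gradv])
  have hGd := hG.differentiableAt one_ne_zero
  have hNd := hN.differentiableAt one_ne_zero
  rw [fderiv_fun_sub (hGd.dotp hNd) (hφ.differentiable one_ne_zero x), _root_.sub_apply,
    fderiv_dotp_apply hGd hNd, fderiv_gradv_apply hGd, ← mulVec_transpose,
    hessM_transpose hv.contDiffAt] at htangent
  linarith

end NeumannCondition

section MixedEstimate

variable {n : ℕ} {Φ φ : (Fin n → ℝ) → ℝ} {Ω : Set (Fin n → ℝ)}

lemma exists_bound_dotp_hessM_mulVec_innerNormal (hΦ : ContDiff ℝ 2 Φ)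
    (hΩdef : Ω = {x | Φ x < 0}) (hΩconv : Convex ℝ Ω) (hΩbd : Bornology.IsBounded Ω)
    (hfr : frontier Ω = {x | Φ x = 0}) (hΦgrad : ∀ x ∈ frontier Ω, gradv Φ x ≠ 0)
    (hφ : ContDiff ℝ 1 φ) :
    ∃ C, ∀ v : (Fin n → ℝ) → ℝ, ContDiff ℝ 2 v → (∀ x ∈ closure Ω, (hessM v x).PosSemidef) →
      (∀ x ∈ frontier Ω, dotp (gradv v x) (innerNormal Φ x) = φ x) →
      ∀ x ∈ frontier Ω, ∀ τ, dotp τ τ = 1 → dotp τ (gradv Φ x) = 0 →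
        |dotp (hessM v x *ᵥ τ) (innerNormal Φ x)| ≤ C := by
  have hK : IsCompact (closure Ω) := hΩbd.isCompact_closure
  have hfrK : IsCompact (frontier Ω) :=
    hK.of_isClosed_subset isClosed_frontier frontier_subset_closure
  have hΦ0 : ∀ x ∈ frontier Ω, Φ x = 0 := fun x hx => by rwa [hfr] at hx
  have hS := isCompact_unitTangents hfrK (contDiff_gradv hΦ (m := 0) (by norm_num)).continuous
  obtain ⟨c, hc, hin⟩ :=
    exists_pos_le_dotp_of_mem_unitTangents (hΦ.of_le one_le_two) hfrK hΦ0 hΦgrad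
  obtain ⟨D, hD⟩ := (hK.prod hK).bddAbove_image
    (f := fun p => eNorm (p.2 - p.1)) (continuous_eNorm.comp (by fun_prop)).continuousOn
  obtain ⟨M, hM⟩ := hfrK.bddAbove_image (f := fun x => |φ x|) hφ.continuous.abs.continuousOn
  obtain ⟨A, hA⟩ := hS.bddAbove_image (f := fun p => |fderiv ℝ φ p.1 p.2|)
    (((hφ.continuous_fderiv one_ne_zero).comp continuous_fst).clm_apply
      continuous_snd).abs.continuousOn
  obtain ⟨B, hB⟩ := hS.bddAbove_image (f := fun p => eNorm (fderiv ℝ (innerNormal Φ) p.1 p.2))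
    (continuous_eNorm.comp_continuousOn (((continuousOn_fderiv_innerNormal hΦ).comp
      continuousOn_fst fun p hp => hΦgrad p.1 hp.1).clm_apply continuousOn_snd))
  set G := M + (D * (M + M * D / c) + M * D) / c
  refine ⟨A + G * B, fun v hv hconv hbc x hx τ hτ hτx => ?_⟩
  have hgrad : eNorm (gradv v x) ≤ G := by
    refine eNorm_gradv_le_of_convexOn (hΩdef ▸ isOpen_lt hΦ.continuous continuous_const) hK hc
      (fun y hy => dotp_innerNormal_self (hΦgrad y hy)) (fun y hy σ hσ hσy => ?_)
      (fun y hy z hz => hD ⟨(y, z), ⟨hy, hz⟩, rfl⟩) (hv.differentiable two_ne_zero)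
      (convexOn_of_hessM_posSemidef hΩconv.closure hv hconv)
      (fun y hy => by rw [hbc y hy]; exact hM ⟨y, hy, rfl⟩) hx
    obtain ⟨z, hz, hcz⟩ :=
      hin (y, σ) ⟨hy, hσ, (dotp_innerNormal_eq_zero_iff (hΦgrad y hy)).1 hσy⟩
    exact ⟨z, subset_closure (hΩdef ▸ hz), hcz⟩
  have hτS : (x, τ) ∈ unitTangents Φ (frontier Ω) := ⟨hx, hτ, hτx⟩
  rw [dotp_hessM_mulVec_innerNormal hΦ hv hφ (hΦ0 x hx) (hΦgrad x hx)
    (fun y hy => hbc y (hfr ▸ hy)) hτx]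
  calc _ ≤ |fderiv ℝ φ x τ| + |dotp (gradv v x) (fderiv ℝ (innerNormal Φ) x τ)| := abs_sub _ _
    _ ≤ A + G * B := by
      gcongr
      · exact hA ⟨_, hτS, rfl⟩
      · exact (abs_dotp_le _ _).trans (mul_le_mul hgrad (hB ⟨_, hτS, rfl⟩) (eNorm_nonneg _)
          ((eNorm_nonneg _).trans hgrad))

end MixedEstimate

theorem mixed_C2_boundary_estimate_general
    (n : ℕ)
    (Φ : (Fin n → ℝ) → ℝ) (Ω : Set (Fin n → ℝ))
    (hΦ : ContDiff ℝ (⊤ : ℕ∞) Φ)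
    (hΦconv : ∀ x, (hessM Φ x).PosDef)
    (hΩdef : Ω = {x | Φ x < 0})
    (hΩbd : Bornology.IsBounded Ω)
    (hfr : frontier Ω = {x | Φ x = 0})
    (hΦgrad : ∀ x ∈ frontier Ω, gradv Φ x ≠ 0)
    (f : (Fin n → ℝ) → (Fin n → ℝ) → ℝ)
    (φ : (Fin n → ℝ) → ℝ) (hφ : ContDiff ℝ (⊤ : ℕ∞) φ)
    (u₀ : (Fin n → ℝ) → ℝ)
 :
    ∃ C : ℝ, ∀ T : ℝ, 0 < T → ∀ u : (Fin n → ℝ) → ℝ → ℝ,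
      IsFlowSol Ω Φ f φ T u →
      (∀ x ∈ closure Ω, u x 0 = u₀ x) →
      ∀ x ∈ frontier Ω, ∀ t ∈ Icc (0:ℝ) T,
        ∀ τ : Fin n → ℝ, eNorm τ = 1 → dotp τ (innerNormal Φ x) = 0 →
          |dotp ((hessM (fun y => u y t) x).mulVec τ) (innerNormal Φ x)| ≤ C := by
  have h2 : (2 : WithTop ℕ∞) ≤ (⊤ : ℕ∞) := WithTop.coe_le_coe.2 le_top
  have hΦ2 : ContDiff ℝ 2 Φ := hΦ.of_le h2
  have hΩconv : Convex ℝ Ω := by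
    simpa [hΩdef] using (convexOn_of_hessM_posSemidef convex_univ hΦ2
      fun x _ => (hΦconv x).posSemidef).convex_lt 0
  obtain ⟨C, hC⟩ := exists_bound_dotp_hessM_mulVec_innerNormal hΦ2 hΩdef hΩconv hΩbd hfr
    hΦgrad (hφ.of_le (one_le_two.trans h2))
  refine ⟨C, fun T hT u ⟨hu, hconv, _, hbc⟩ _ x hx t ht τ hτ hτν => ?_⟩
  have hu2 : ContDiff ℝ 2 fun p : (Fin n → ℝ) × ℝ => u p.1 p.2 := hu.of_le h2
  have hslice : Ioc 0 T ⊆ {s | |dotp (hessM (fun y => u y s) x *ᵥ τ) (innerNormal Φ x)| ≤ C} :=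
    fun s hs => hC _ (hu2.comp (contDiff_id.prodMk contDiff_const))
      (fun y hy => (hconv s (Ioc_subset_Icc_self hs) y hy).posSemidef) (hbc s hs) x hx τ
      (eNorm_eq_one_iff.1 hτ) ((dotp_innerNormal_eq_zero_iff (hΦgrad x hx)).1 hτν)
  refine closure_minimal hslice (isClosed_le ?_ continuous_const) (closure_Ioc hT.ne ▸ ht)
  exact (((continuous_hessM_of_contDiff hu2 x).matrix_mulVec continuous_const).dotp
    continuous_const).abs

/-- Lemma 5.1 (Mixed C²-estimates at the boundary): `|u_{τν}| ≤ C` on `∂Ω`,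
uniformly in time, for solutions of the flow. -/
theorem mixed_C2_boundary_estimate
    (n : ℕ) (hn : 2 ≤ n)
    (Φ : (Fin n → ℝ) → ℝ) (Ω : Set (Fin n → ℝ))
    (hΦ : ContDiff ℝ (⊤ : ℕ∞) Φ)
    (hΦconv : ∀ x, (hessM Φ x).PosDef)
    (hΩdef : Ω = {x | Φ x < 0})
    (hΩbd : Bornology.IsBounded Ω)
    (hfr : frontier Ω = {x | Φ x = 0})
    (hΦgrad : ∀ x ∈ frontier Ω, gradv Φ x ≠ 0)
    (f : (Fin n → ℝ) → (Fin n → ℝ) → ℝ)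
    (hf : ContDiff ℝ (⊤ : ℕ∞) (fun p : (Fin n → ℝ) × (Fin n → ℝ) => f p.1 p.2))
    (hfpos : ∀ x p, 0 < f x p)
    (φ : (Fin n → ℝ) → ℝ) (hφ : ContDiff ℝ (⊤ : ℕ∞) φ)
    (u₀ : (Fin n → ℝ) → ℝ) (hu₀ : ContDiff ℝ (⊤ : ℕ∞) u₀)
    (hu₀conv : ∀ x ∈ closure Ω, (hessM u₀ x).PosDef)
    (hu₀bc : ∀ x ∈ frontier Ω, dotp (gradv u₀ x) (innerNormal Φ x) = φ x)
 :
    ∃ C : ℝ, ∀ T : ℝ, 0 < T → ∀ u : (Fin n → ℝ) → ℝ → ℝ,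
      IsFlowSol Ω Φ f φ T u →
      (∀ x ∈ closure Ω, u x 0 = u₀ x) →
      ∀ x ∈ frontier Ω, ∀ t ∈ Icc (0:ℝ) T,
        ∀ τ : Fin n → ℝ, eNorm τ = 1 → dotp τ (innerNormal Φ x) = 0 →
          |dotp ((hessM (fun y => u y t) x).mulVec τ) (innerNormal Φ x)| ≤ C :=
  mixed_C2_boundary_estimate_general n Φ Ω hΦ hΦconv hΩdef hΩbd hfr hΦgrad f φ hφ u₀
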